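/- arXiv:1602.08450 — 2 statements merged into one kernel-verified Lean document; each statement's English description precedes it below -/
import Mathlib

section
/- For every real number x > 0, the unnormalized Jeffreys posterior for a single Lomax observation has finite total mass π/(2x): ∫₀^∞ ∫₀^∞ (α^{1/2} / ((α+1)·(α+2)^{1/2})) · β^{-2} · (1 + x/β)^{-(α+1)} dβ dα = π/(2x). In particular, the posterior distribution of (β, α) under the Jeffreys prior is proper for sample size n = 1. -/
open MeasureTheory Real Filter Topology Set

/-!
Both integrals are elementary. For fixed `α > 0` the inner integrand is the derivative in `β` of
`(β / (β + x)) ^ α / (x * α)`, which rises from `0` to `1 / (x * α)`. After dividing by `α`, the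
Jeffreys weight becomes `1 / ((α + 1) √(α (α + 2)))`, the derivative of `arctan √(α (α + 2))`,
which rises from `0` to `π / 2`.
-/

lemma one_add_div_rpow_neg {x β : ℝ} (hx : 0 ≤ x) (hβ : 0 < β) (p : ℝ) :
    (1 + x / β) ^ (-p) = (β / (β + x)) ^ p := by
  rw [rpow_neg (by positivity), ← inv_rpow (by positivity)]
  congr 1
  field_simp

lemma hasDerivAt_div_add_rpow {x β : ℝ} (hx : 0 ≤ x) (hβ : 0 < β) (a : ℝ) :
    HasDerivAt (fun t => (t / (t + x)) ^ a)
      (x * a * (β ^ (-(2 : ℝ)) * (1 + x / β) ^ (-(a + 1)))) β := by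
  have hβx : 0 < β + x := by linarith
  have hq : 0 < β / (β + x) := div_pos hβ hβx
  have hquot : HasDerivAt (fun t => t / (t + x)) (x / (β + x) ^ 2) β := by
    refine ((hasDerivAt_id' β).div ((hasDerivAt_id' β).add_const x) hβx.ne').congr_deriv ?_
    ring
  convert hquot.rpow_const (p := a) (Or.inl hq.ne') using 1
  have hsplit : (β / (β + x)) ^ (a + 1) = (β / (β + x)) ^ (a - 1) * (β / (β + x)) ^ 2 := by
    rw [← rpow_natCast, ← rpow_add hq]
    congr 1
    push_cast
    ring
  rw [one_add_div_rpow_neg hx hβ, hsplit, rpow_neg hβ.le, rpow_two]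
  field_simp

lemma tendsto_div_add_const_atTop (x : ℝ) : Tendsto (fun t : ℝ => t / (t + x)) atTop (𝓝 1) := by
  have : Tendsto (fun t : ℝ => 1 - x / (t + x)) atTop (𝓝 (1 - 0)) :=
    tendsto_const_nhds.sub
      (tendsto_const_nhds.div_atTop (tendsto_atTop_add_const_right _ x tendsto_id))
  rw [sub_zero] at this
  refine this.congr' ?_
  filter_upwards [eventually_gt_atTop (-x)] with t ht
  have : t + x ≠ 0 := by linarith
  field_simp
  ring

lemma integral_Ioi_rpow_neg_two_mul_one_add_div_rpow_neg {x a : ℝ} (hx : 0 < x) (ha : 0 < a) :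
    ∫ β in Ioi (0 : ℝ), β ^ (-(2 : ℝ)) * (1 + x / β) ^ (-(a + 1)) = 1 / (x * a) := by
  have hcont : ContinuousAt (fun t : ℝ => t / (t + x)) 0 :=
    continuousAt_id.div (continuousAt_id.add continuousAt_const) (by simpa using hx.ne')
  rw [integral_Ioi_of_hasDerivAt_of_nonneg (g := fun t => (x * a)⁻¹ * (t / (t + x)) ^ a)
    (l := (x * a)⁻¹ * 1 ^ a)]
  · simp [zero_rpow ha.ne']
  · exact (continuousAt_const.mul (hcont.rpow_const (Or.inr ha.le))).continuousWithinAt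
  · intro β hβ
    refine ((hasDerivAt_div_add_rpow hx.le hβ a).const_mul (x * a)⁻¹).congr_deriv ?_
    field_simp
  · intro β (hβ : 0 < β)
    positivity
  · exact ((tendsto_div_add_const_atTop x).rpow_const (Or.inl one_ne_zero)).const_mul _

lemma hasDerivAt_arctan_sqrt_mul_add_two {a : ℝ} (ha : 0 < a) :
    HasDerivAt (fun t => arctan √(t * (t + 2)))
      (a ^ ((1 : ℝ) / 2) / ((a + 1) * (a + 2) ^ ((1 : ℝ) / 2)) / a) a := by
  have hp : 0 < a * (a + 2) := by positivity
  have hpoly : HasDerivAt (fun t => t * (t + 2)) (2 * (a + 1)) a := by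
    refine ((hasDerivAt_id' a).mul ((hasDerivAt_id' a).add_const 2)).congr_deriv ?_
    ring
  convert ((hpoly.sqrt hp.ne').arctan) using 1
  rw [← sqrt_eq_rpow, ← sqrt_eq_rpow, sq_sqrt hp.le, sqrt_mul ha.le]
  have hsa : √a ^ 2 = a := sq_sqrt ha.le
  have : 0 < √a := sqrt_pos.mpr ha
  have : 0 < √(a + 2) := sqrt_pos.mpr (by linarith)
  field_simp
  linear_combination (a + 1) ^ 2 * hsa

lemma tendsto_arctan_sqrt_mul_add_two :
    Tendsto (fun t : ℝ => arctan √(t * (t + 2))) atTop (𝓝 (π / 2)) := by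
  have hpoly : Tendsto (fun t : ℝ => t * (t + 2)) atTop atTop :=
    tendsto_id.atTop_mul_atTop₀ (tendsto_atTop_add_const_right _ 2 tendsto_id)
  exact (tendsto_arctan_atTop.mono_right nhdsWithin_le_nhds).comp
    (tendsto_sqrt_atTop.comp hpoly)

lemma integral_Ioi_rpow_half_div_mul_add_two_rpow_half_div_self :
    ∫ a in Ioi (0 : ℝ), a ^ ((1 : ℝ) / 2) / ((a + 1) * (a + 2) ^ ((1 : ℝ) / 2)) / a = π / 2 := by
  rw [integral_Ioi_of_hasDerivAt_of_nonneg (continuous_arctan.comp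
      (continuous_sqrt.comp (by fun_prop))).continuousWithinAt
    (fun a ha => hasDerivAt_arctan_sqrt_mul_add_two ha) (fun a (ha : 0 < a) => ?_)
    tendsto_arctan_sqrt_mul_add_two]
  · simp
  · positivity

/-- The unnormalized Jeffreys posterior for a single Lomax observation x > 0 has finite
    total mass π/(2x), i.e. the posterior is proper for sample size n = 1. -/
theorem jeffreys_posterior_proper_single_obs (x : ℝ) (hx : 0 < x) :
    ∫ α in Set.Ioi (0 : ℝ), ∫ β in Set.Ioi (0 : ℝ),
        (α ^ ((1 : ℝ) / 2) / ((α + 1) * (α + 2) ^ ((1 : ℝ) / 2)))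
          * β ^ (-(2 : ℝ)) * (1 + x / β) ^ (-(α + 1))
      = π / (2 * x) := by
  calc _ = ∫ α in Ioi (0 : ℝ),
        α ^ ((1 : ℝ) / 2) / ((α + 1) * (α + 2) ^ ((1 : ℝ) / 2)) / α / x := by
        refine setIntegral_congr_fun measurableSet_Ioi fun α (hα : 0 < α) => ?_
        simp_rw [mul_assoc]
        rw [integral_const_mul, integral_Ioi_rpow_neg_two_mul_one_add_div_rpow_neg hx hα]
        field_simp
    _ = π / (2 * x) := by
        rw [integral_div, integral_Ioi_rpow_half_div_mul_add_two_rpow_half_div_self]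
        field_simp
end

section
/- For every real number x > 0, the unnormalized reference-prior posterior for a single Lomax observation has infinite total mass: ∫₀^∞ ∫₀^∞ (1/(α·β)) · (α/β)·(1 + x/β)^{-(α+1)} dβ dα = ∞. That is, the posterior distribution of (β, α) under the reference prior π(β,α) ∝ 1/(α·β) is improper for sample size n = 1. -/
/-!
After cancelling `α`, the integrand is `β⁻² (1 + x/β)^{-(α+1)}`. For `0 < β < x` we have
`1 + x/β ≤ 2x/β`, so the integrand is at least `(2x)^{-(α+1)} β^{α-1}`, whose integral over
`(0, x)` is `(2x)^{-(α+1)} x^α / α ≥ 1/(4xα)` when `α ≤ 1`. Hence the inner integral dominates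
a multiple of `1/α` on `(0, 1)`, which is not integrable at `0`.
-/

open MeasureTheory Real Set

noncomputable def lomaxPDFReal (β α x : ℝ) : ℝ := α / β * (1 + x / β) ^ (-(α + 1))

noncomputable def lomaxReferencePrior (β α : ℝ) : ℝ := 1 / (α * β)

theorem lintegral_Ioo_zero_ofReal_inv_eq_top {c : ℝ} (hc : 0 < c) :
    ∫⁻ t in Ioo 0 c, ENNReal.ofReal t⁻¹ = ⊤ := by
  by_contra h
  have hint : IntegrableOn (fun t : ℝ => t ^ (-1 : ℝ)) (Ioo 0 c) := by
    simp_rw [rpow_neg_one]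
    exact (lintegral_ofReal_ne_top_iff_integrable measurable_inv.aestronglyMeasurable
      (ae_restrict_of_forall_mem measurableSet_Ioo fun t ht => inv_nonneg.2 ht.1.le)).1 h
  exact lt_irrefl _ ((intervalIntegral.integrableOn_Ioo_rpow_iff hc).1 hint)

theorem lintegral_Ioo_zero_ofReal_rpow {c r : ℝ} (hc : 0 < c) (hr : -1 < r) :
    ∫⁻ t in Ioo 0 c, ENNReal.ofReal (t ^ r) = ENNReal.ofReal (c ^ (r + 1) / (r + 1)) := by
  rw [← ofReal_integral_eq_lintegral_ofReal
    ((intervalIntegral.integrableOn_Ioo_rpow_iff hc).2 hr)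
    (ae_restrict_of_forall_mem measurableSet_Ioo fun t ht => rpow_nonneg ht.1.le r),
    ← integral_Ioc_eq_integral_Ioo, ← intervalIntegral.integral_of_le hc.le,
    integral_rpow (Or.inl hr), zero_rpow (by linarith), sub_zero]

theorem rpow_mul_rpow_le_lomaxReferencePrior_mul_lomaxPDFReal {x α β : ℝ} (hα : 0 < α)
    (hβ : 0 < β) (hβx : β ≤ x) :
    (2 * x) ^ (-(α + 1)) * β ^ (α - 1) ≤ lomaxReferencePrior β α * lomaxPDFReal β α x := by
  have hx : 0 < x := hβ.trans_le hβx
  have hβ_pow : β ^ (α - 1) = β ^ (α + 1) / β ^ 2 := by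
    rw [← rpow_natCast, ← rpow_sub hβ]
    ring_nf
  have hbase : 1 + x / β ≤ 2 * x / β := by
    rw [mul_div_assoc, two_mul]
    gcongr
    exact (one_le_div hβ).2 hβx
  calc (2 * x) ^ (-(α + 1)) * β ^ (α - 1) = (2 * x / β) ^ (-(α + 1)) / β ^ 2 := by
        rw [div_rpow (by linarith) hβ.le, rpow_neg hβ.le, hβ_pow]
        field_simp
    _ ≤ (1 + x / β) ^ (-(α + 1)) / β ^ 2 := by
        have h_pow := rpow_le_rpow_of_nonpos (by positivity) hbase (by linarith : -(α + 1) ≤ 0)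
        gcongr
    _ = lomaxReferencePrior β α * lomaxPDFReal β α x := by
        unfold lomaxReferencePrior lomaxPDFReal
        field_simp

theorem ofReal_inv_le_lintegral_lomaxReferencePrior_mul_lomaxPDFReal {x α : ℝ} (hx : 0 < x)
    (hα : 0 < α) (hα1 : α ≤ 1) :
    ENNReal.ofReal (4 * x)⁻¹ * ENNReal.ofReal α⁻¹ ≤
      ∫⁻ β in Ioi 0, ENNReal.ofReal (lomaxReferencePrior β α * lomaxPDFReal β α x) := by
  have h_two : (4 : ℝ)⁻¹ ≤ 2 ^ (-(α + 1)) := by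
    calc (4 : ℝ)⁻¹ = 2 ^ (-2 : ℝ) := by norm_num
      _ ≤ 2 ^ (-(α + 1)) := rpow_le_rpow_of_exponent_le one_le_two (by linarith)
  have h_x : (2 * x) ^ (-(α + 1)) * x ^ α = 2 ^ (-(α + 1)) * x⁻¹ := by
    rw [mul_rpow zero_le_two hx.le, mul_assoc, ← rpow_add hx,
      show -(α + 1) + α = -1 by ring, rpow_neg_one]
  have h_const : (4 * x)⁻¹ * α⁻¹ ≤ (2 * x) ^ (-(α + 1)) * (x ^ α / α) := by
    calc (4 * x)⁻¹ * α⁻¹ = 4⁻¹ * x⁻¹ * α⁻¹ := by rw [mul_inv]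
      _ ≤ 2 ^ (-(α + 1)) * x⁻¹ * α⁻¹ := by gcongr
      _ = (2 * x) ^ (-(α + 1)) * (x ^ α / α) := by rw [← h_x]; ring
  have h_int := lintegral_Ioo_zero_ofReal_rpow hx (by linarith : -1 < α - 1)
  rw [sub_add_cancel] at h_int
  calc ENNReal.ofReal (4 * x)⁻¹ * ENNReal.ofReal α⁻¹
      ≤ ENNReal.ofReal ((2 * x) ^ (-(α + 1))) * ENNReal.ofReal (x ^ α / α) := by
        rw [← ENNReal.ofReal_mul (by positivity), ← ENNReal.ofReal_mul (by positivity)]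
        exact ENNReal.ofReal_le_ofReal h_const
    _ = ∫⁻ β in Ioo 0 x, ENNReal.ofReal ((2 * x) ^ (-(α + 1)) * β ^ (α - 1)) := by
        rw [← h_int, ← lintegral_const_mul' _ _ ENNReal.ofReal_ne_top]
        refine setLIntegral_congr_fun measurableSet_Ioo fun β _ => ?_
        rw [ENNReal.ofReal_mul (by positivity)]
    _ ≤ ∫⁻ β in Ioo 0 x, ENNReal.ofReal (lomaxReferencePrior β α * lomaxPDFReal β α x) :=
        setLIntegral_mono' measurableSet_Ioo fun β hβ => ENNReal.ofReal_le_ofReal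
          (rpow_mul_rpow_le_lomaxReferencePrior_mul_lomaxPDFReal hα hβ.1 hβ.2.le)
    _ ≤ _ := lintegral_mono_set Ioo_subset_Ioi_self

/-- The unnormalized reference-prior posterior for a single Lomax observation x > 0 has
    infinite total mass, i.e. the posterior under π(β,α) ∝ 1/(αβ) is improper for n = 1. -/
theorem reference_posterior_improper_single_obs (x : ℝ) (hx : 0 < x) :
    ∫⁻ α in Set.Ioi (0 : ℝ), ∫⁻ β in Set.Ioi (0 : ℝ),
        ENNReal.ofReal ((1 / (α * β)) * ((α / β) * (1 + x / β) ^ (-(α + 1))))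
      = ⊤ := by
  refine eq_top_iff.2 ?_
  calc ⊤ = ENNReal.ofReal (4 * x)⁻¹ * ∫⁻ α in Ioo 0 1, ENNReal.ofReal α⁻¹ := by
        rw [lintegral_Ioo_zero_ofReal_inv_eq_top one_pos,
          ENNReal.mul_top (ENNReal.ofReal_pos.2 (by positivity)).ne']
    _ = ∫⁻ α in Ioo 0 1, ENNReal.ofReal (4 * x)⁻¹ * ENNReal.ofReal α⁻¹ :=
        (lintegral_const_mul' _ _ ENNReal.ofReal_ne_top).symm
    _ ≤ ∫⁻ α in Ioo 0 1, ∫⁻ β in Ioi 0,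
          ENNReal.ofReal (lomaxReferencePrior β α * lomaxPDFReal β α x) :=
        setLIntegral_mono' measurableSet_Ioo fun α hα =>
          ofReal_inv_le_lintegral_lomaxReferencePrior_mul_lomaxPDFReal hx hα.1 hα.2.le
    _ ≤ _ := lintegral_mono_set Ioo_subset_Ioi_self
end
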